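/- arXiv:1804.08960 — 4 statements merged into one kernel-verified Lean document; each statement's English description precedes it below -/
import Mathlib

section
/- Let T be a bounded linear operator on a complex Hilbert space H such that both T and its inverse exist and sup over all integers n of ‖T^n‖ is finite. Then T is similar to a unitary operator: there exists an invertible bounded operator L on H such that L⁻¹TL is unitary. -/
/-!
Sz.-Nagy's averaging argument. A Banach limit, taken here as a limit of Cesàro means along a
free ultrafilter, applied to `n ↦ ⟪Tⁿ x, Tⁿ y⟫` gives a bounded sesquilinear form, hence an
operator `S` with `⟪S (T x), T y⟫ = ⟪S x, y⟫` (the Cesàro means make the limit shift invariant)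
and `S ≥ M⁻² • 1` (because `‖x‖ ≤ M ‖Tⁿ x‖`). So `S` is strictly positive, its square root `R`
is invertible, and for `w = R⁻¹ x` we get `‖R (T w)‖² = re ⟪S (T w), T w⟫ = re ⟪S w, w⟫ = ‖x‖²`.
-/

open ContinuousLinearMap

open Filter Topology Finset ComplexConjugate
open scoped InnerProductSpace

noncomputable def cesaroMean (u : ℕ → ℂ) (N : ℕ) : ℂ := (N : ℂ)⁻¹ * ∑ i ∈ range N, u i

section cesaroMean

variable {u v : ℕ → ℂ} {C : ℝ}

theorem norm_cesaroMean_le (hu : ∀ n, ‖u n‖ ≤ C) (N : ℕ) : ‖cesaroMean u N‖ ≤ C := by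
  rcases Nat.eq_zero_or_pos N with rfl | hN
  · simpa [cesaroMean] using (norm_nonneg _).trans (hu 0)
  have hsum : ‖∑ i ∈ range N, u i‖ ≤ N * C := by
    simpa using norm_sum_le_of_le (range N) fun i _ => hu i
  rw [cesaroMean, norm_mul, norm_inv, Complex.norm_natCast, inv_mul_le_iff₀ (by positivity)]
  exact hsum

theorem cesaroMean_add (N : ℕ) :
    cesaroMean (fun n => u n + v n) N = cesaroMean u N + cesaroMean v N := by
  simp only [cesaroMean, sum_add_distrib, mul_add]

theorem cesaroMean_const_mul (a : ℂ) (N : ℕ) :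
    cesaroMean (fun n => a * u n) N = a * cesaroMean u N := by
  simp only [cesaroMean, ← mul_sum]
  ring

theorem cesaroMean_conj (N : ℕ) :
    cesaroMean (fun n => conj (u n)) N = conj (cesaroMean u N) := by
  simp [cesaroMean]

theorem cesaroMean_shift_sub (N : ℕ) :
    cesaroMean (fun n => u (n + 1)) N - cesaroMean u N = (N : ℂ)⁻¹ * (u N - u 0) := by
  have h := sum_range_succ' u N
  rw [sum_range_succ] at h
  simp only [cesaroMean]
  linear_combination -(N : ℂ)⁻¹ * h

theorem tendsto_cesaroMean_shift_sub (hu : ∀ n, ‖u n‖ ≤ C) :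
    Tendsto (fun N => cesaroMean (fun n => u (n + 1)) N - cesaroMean u N) atTop (𝓝 0) := by
  simp only [cesaroMean_shift_sub]
  refine squeeze_zero_norm (a := fun N : ℕ => (N : ℝ)⁻¹ * (2 * C)) (fun N => ?_) ?_
  · rw [norm_mul, norm_inv, Complex.norm_natCast]
    gcongr
    exact (norm_sub_le _ _).trans (by linarith [hu N, hu 0])
  · simpa using tendsto_inv_atTop_nhds_zero_nat.mul_const (2 * C)

theorem le_re_cesaroMean {c : ℝ} (h : ∀ n, c ≤ (u n).re) {N : ℕ} (hN : N ≠ 0) :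
    c ≤ (cesaroMean u N).re := by
  have hsum : N * c ≤ ∑ i ∈ range N, (u i).re := by
    simpa using card_nsmul_le_sum (range N) (fun i => (u i).re) c fun i _ => h i
  rw [cesaroMean, ← Complex.ofReal_natCast, ← Complex.ofReal_inv, Complex.re_ofReal_mul,
    Complex.re_sum, le_inv_mul_iff₀ (by positivity)]
  exact hsum

end cesaroMean

noncomputable def banachLimit (u : ℕ → ℂ) : ℂ :=
  limUnder (Ultrafilter.of (atTop : Filter ℕ) : Filter ℕ) (cesaroMean u)

section banachLimit

variable {u v : ℕ → ℂ} {C D : ℝ}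

theorem tendsto_banachLimit (hu : ∀ n, ‖u n‖ ≤ C) :
    Tendsto (cesaroMean u) (Ultrafilter.of (atTop : Filter ℕ) : Filter ℕ) (𝓝 (banachLimit u)) := by
  obtain ⟨a, -, ha⟩ := (isCompact_closedBall (0 : ℂ) C).ultrafilter_le_nhds
    ((Ultrafilter.of atTop).map (cesaroMean u))
    (le_principal_iff.2 <| mem_map.2 <| univ_mem' fun N =>
      mem_closedBall_zero_iff.2 (norm_cesaroMean_le hu N))
  exact tendsto_nhds_limUnder ⟨a, ha⟩

theorem banachLimit_eq_of_tendsto (hu : ∀ n, ‖u n‖ ≤ C) {a : ℂ}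
    (h : Tendsto (cesaroMean u) (Ultrafilter.of (atTop : Filter ℕ) : Filter ℕ) (𝓝 a)) :
    banachLimit u = a :=
  tendsto_nhds_unique (tendsto_banachLimit hu) h

theorem banachLimit_add (hu : ∀ n, ‖u n‖ ≤ C) (hv : ∀ n, ‖v n‖ ≤ D) :
    banachLimit (fun n => u n + v n) = banachLimit u + banachLimit v :=
  banachLimit_eq_of_tendsto (fun n => (norm_add_le _ _).trans (add_le_add (hu n) (hv n))) <|
    ((tendsto_banachLimit hu).add (tendsto_banachLimit hv)).congr fun N => (cesaroMean_add N).symm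

theorem banachLimit_const_mul (a : ℂ) (hu : ∀ n, ‖u n‖ ≤ C) :
    banachLimit (fun n => a * u n) = a * banachLimit u :=
  banachLimit_eq_of_tendsto (C := ‖a‖ * C)
    (fun n => (norm_mul_le _ _).trans (mul_le_mul_of_nonneg_left (hu n) (norm_nonneg a))) <|
    ((tendsto_banachLimit hu).const_mul a).congr fun N => (cesaroMean_const_mul a N).symm

theorem banachLimit_conj (hu : ∀ n, ‖u n‖ ≤ C) :
    banachLimit (fun n => conj (u n)) = conj (banachLimit u) :=
  banachLimit_eq_of_tendsto (fun n => (Complex.norm_conj _).trans_le (hu n)) <|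
    ((Complex.continuous_conj.tendsto _).comp (tendsto_banachLimit hu)).congr
      fun N => (cesaroMean_conj N).symm

theorem banachLimit_shift (hu : ∀ n, ‖u n‖ ≤ C) :
    banachLimit (fun n => u (n + 1)) = banachLimit u := by
  refine banachLimit_eq_of_tendsto (fun n => hu (n + 1)) ?_
  have hsub := (tendsto_cesaroMean_shift_sub hu).mono_left (Ultrafilter.of_le atTop)
  simpa using (tendsto_banachLimit hu).add hsub

theorem le_re_banachLimit (hu : ∀ n, ‖u n‖ ≤ C) {c : ℝ} (h : ∀ n, c ≤ (u n).re) :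
    c ≤ (banachLimit u).re :=
  (isClosed_le continuous_const Complex.continuous_re).mem_of_tendsto (tendsto_banachLimit hu) <|
    Eventually.mono (Ultrafilter.of_le atTop (eventually_ne_atTop 0)) fun _ hN =>
      le_re_cesaroMean h hN

theorem norm_banachLimit_le (hu : ∀ n, ‖u n‖ ≤ C) : ‖banachLimit u‖ ≤ C :=
  le_of_tendsto (tendsto_banachLimit hu).norm (Eventually.of_forall (norm_cesaroMean_le hu))

end banachLimit

section averagedInner

variable {H : Type*} [NormedAddCommGroup H] [InnerProductSpace ℂ H]

noncomputable def averagedInner (T : H →L[ℂ] H) (x y : H) : ℂ :=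
  banachLimit fun n => ⟪(T ^ n) x, (T ^ n) y⟫_ℂ

variable {T : H →L[ℂ] H} {M : ℝ}

theorem norm_inner_pow_apply_le (hT : ∀ n : ℕ, ‖T ^ n‖ ≤ M) (x y : H) (n : ℕ) :
    ‖⟪(T ^ n) x, (T ^ n) y⟫_ℂ‖ ≤ M ^ 2 * ‖x‖ * ‖y‖ := by
  have hle : ∀ z : H, ‖(T ^ n) z‖ ≤ M * ‖z‖ := fun z => (T ^ n).le_of_opNorm_le (hT n) z
  calc ‖⟪(T ^ n) x, (T ^ n) y⟫_ℂ‖ ≤ ‖(T ^ n) x‖ * ‖(T ^ n) y‖ := norm_inner_le_norm _ _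
    _ ≤ M * ‖x‖ * (M * ‖y‖) :=
      mul_le_mul (hle x) (hle y) (norm_nonneg _) ((norm_nonneg _).trans (hle x))
    _ = M ^ 2 * ‖x‖ * ‖y‖ := by ring

theorem averagedInner_add_left (hT : ∀ n : ℕ, ‖T ^ n‖ ≤ M) (x x' y : H) :
    averagedInner T (x + x') y = averagedInner T x y + averagedInner T x' y := by
  simp only [averagedInner, map_add, inner_add_left]
  exact banachLimit_add (norm_inner_pow_apply_le hT x y) (norm_inner_pow_apply_le hT x' y)

theorem averagedInner_add_right (hT : ∀ n : ℕ, ‖T ^ n‖ ≤ M) (x y y' : H) :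
    averagedInner T x (y + y') = averagedInner T x y + averagedInner T x y' := by
  simp only [averagedInner, map_add, inner_add_right]
  exact banachLimit_add (norm_inner_pow_apply_le hT x y) (norm_inner_pow_apply_le hT x y')

theorem averagedInner_smul_left (hT : ∀ n : ℕ, ‖T ^ n‖ ≤ M) (a : ℂ) (x y : H) :
    averagedInner T (a • x) y = conj a * averagedInner T x y := by
  simp only [averagedInner, map_smul, inner_smul_left]
  exact banachLimit_const_mul _ (norm_inner_pow_apply_le hT x y)

theorem averagedInner_smul_right (hT : ∀ n : ℕ, ‖T ^ n‖ ≤ M) (a : ℂ) (x y : H) :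
    averagedInner T x (a • y) = a * averagedInner T x y := by
  simp only [averagedInner, map_smul, inner_smul_right]
  exact banachLimit_const_mul _ (norm_inner_pow_apply_le hT x y)

theorem conj_averagedInner (hT : ∀ n : ℕ, ‖T ^ n‖ ≤ M) (x y : H) :
    conj (averagedInner T y x) = averagedInner T x y := by
  simp only [averagedInner, ← banachLimit_conj (norm_inner_pow_apply_le hT y x), inner_conj_symm]

theorem averagedInner_apply_apply (hT : ∀ n : ℕ, ‖T ^ n‖ ≤ M) (x y : H) :
    averagedInner T (T x) (T y) = averagedInner T x y := by
  have hpow : ∀ (n : ℕ) (z : H), (T ^ n) (T z) = (T ^ (n + 1)) z := fun n z => by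
    rw [pow_succ]; rfl
  simp only [averagedInner, hpow]
  exact banachLimit_shift (u := fun n => ⟪(T ^ n) x, (T ^ n) y⟫_ℂ) (norm_inner_pow_apply_le hT x y)

theorem norm_averagedInner_le (hT : ∀ n : ℕ, ‖T ^ n‖ ≤ M) (x y : H) :
    ‖averagedInner T x y‖ ≤ M ^ 2 * ‖x‖ * ‖y‖ :=
  norm_banachLimit_le (norm_inner_pow_apply_le hT x y)

theorem le_re_averagedInner_self (hT : ∀ n : ℕ, ‖T ^ n‖ ≤ M) {c : ℝ}
    (hlow : ∀ (n : ℕ) (x : H), c * ‖x‖ ^ 2 ≤ ‖(T ^ n) x‖ ^ 2) (x : H) :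
    c * ‖x‖ ^ 2 ≤ (averagedInner T x x).re :=
  le_re_banachLimit (norm_inner_pow_apply_le hT x x) fun n =>
    (hlow n x).trans_eq (inner_self_eq_norm_sq (𝕜 := ℂ) _).symm

noncomputable def averagedInnerForm (hT : ∀ n : ℕ, ‖T ^ n‖ ≤ M) : H →L⋆[ℂ] H →L[ℂ] ℂ :=
  LinearMap.mkContinuous₂
    (LinearMap.mk₂'ₛₗ (starRingEnd ℂ) (RingHom.id ℂ) (averagedInner T) (averagedInner_add_left hT)
      (averagedInner_smul_left hT) (averagedInner_add_right hT) (averagedInner_smul_right hT))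
    (M ^ 2) (norm_averagedInner_le hT)

end averagedInner

section Hilbert

variable {H : Type*} [NormedAddCommGroup H] [InnerProductSpace ℂ H] [CompleteSpace H]

theorem exists_algebraMap_le_invariant_operator {T : H →L[ℂ] H} {M c : ℝ}
    (hT : ∀ n : ℕ, ‖T ^ n‖ ≤ M) (hlow : ∀ (n : ℕ) (x : H), c * ‖x‖ ^ 2 ≤ ‖(T ^ n) x‖ ^ 2) :
    ∃ S : H →L[ℂ] H,
      algebraMap ℝ (H →L[ℂ] H) c ≤ S ∧ ∀ x y, ⟪S (T x), T y⟫_ℂ = ⟪S x, y⟫_ℂ := by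
  set S := InnerProductSpace.continuousLinearMapOfBilin (averagedInnerForm hT)
  have hS : ∀ x y, ⟪S x, y⟫_ℂ = averagedInner T x y :=
    InnerProductSpace.continuousLinearMapOfBilin_apply _
  have hsymm : ∀ x y, ⟪S x, y⟫_ℂ = ⟪x, S y⟫_ℂ := fun x y => by
    rw [← inner_conj_symm x, hS, hS, conj_averagedInner hT]
  have hc : ∀ x, algebraMap ℝ (H →L[ℂ] H) c x = (c : ℂ) • x := fun x => rfl
  refine ⟨S, (le_def _ _).2 ⟨fun x y => ?_, fun x => ?_⟩,
    fun x y => by rw [hS, hS, averagedInner_apply_apply hT]⟩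
  · simp only [coe_coe, sub_apply, hc, inner_sub_left, inner_sub_right, inner_smul_left,
      inner_smul_right, Complex.conj_ofReal, hsymm]
  · simp only [reApplyInnerSelf, sub_apply, hc, inner_sub_left, inner_smul_left,
      Complex.conj_ofReal, hS]
    rw [map_sub, RCLike.re_to_complex, RCLike.re_to_complex, Complex.re_ofReal_mul, sub_nonneg,
      ← RCLike.re_to_complex, inner_self_eq_norm_sq]
    exact le_re_averagedInner_self hT hlow x

theorem norm_cfcSqrt_apply_sq {S : H →L[ℂ] H} (hS : 0 ≤ S) (x : H) :
    ‖CFC.sqrt S x‖ ^ 2 = RCLike.re ⟪S x, x⟫_ℂ := by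
  rw [apply_norm_sq_eq_inner_adjoint_left, ← star_eq_adjoint,
    (CFC.sqrt_nonneg S).isSelfAdjoint.star_eq, ← ContinuousLinearMap.mul_def,
    CFC.sqrt_mul_sqrt_self S hS]

theorem exists_conj_isometry_of_isStrictlyPositive {S T : H →L[ℂ] H} (hS : IsStrictlyPositive S)
    (hT : ∀ x, RCLike.re ⟪S (T x), T x⟫_ℂ = RCLike.re ⟪S x, x⟫_ℂ) :
    ∃ L : H ≃L[ℂ] H, ∀ x, ‖L.symm (T (L x))‖ = ‖x‖ := by
  obtain ⟨R, hR⟩ := hS.isUnit_cfcSqrt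
  have hnorm : ∀ z, ‖(R : H →L[ℂ] H) z‖ ^ 2 = RCLike.re ⟪S z, z⟫_ℂ :=
    hR ▸ norm_cfcSqrt_apply_sq hS.nonneg
  refine ⟨ContinuousLinearEquiv.unitsEquiv ℂ H R⁻¹, fun x => ?_⟩
  have hx : (R : H →L[ℂ] H) (((R⁻¹ : (H →L[ℂ] H)ˣ) : H →L[ℂ] H) x) = x :=
    DFunLike.congr_fun R.mul_inv x
  change ‖(R : H →L[ℂ] H) (T (((R⁻¹ : (H →L[ℂ] H)ˣ) : H →L[ℂ] H) x))‖ = ‖x‖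
  rw [← pow_left_inj₀ (norm_nonneg _) (norm_nonneg _) two_ne_zero, hnorm, hT, ← hnorm, hx]

end Hilbert

namespace ContinuousLinearEquiv

theorem coe_zpow_natCast {R E : Type*} [Semiring R] [AddCommMonoid E] [Module R E]
    [TopologicalSpace E] (T : E ≃L[R] E) (n : ℕ) :
    ((T ^ (n : ℤ) : E ≃L[R] E) : E →L[R] E) = (T : E →L[R] E) ^ n := by
  induction n with
  | zero => rfl
  | succ k ih => rw [pow_succ, ← ih, Nat.cast_succ, zpow_add_one]; rfl

theorem norm_le_mul_norm_pow_apply {𝕜 E : Type*} [NontriviallyNormedField 𝕜]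
    [SeminormedAddCommGroup E] [NormedSpace 𝕜 E] (T : E ≃L[𝕜] E) {M : ℝ}
    (hbd : ∀ n : ℤ, ‖((T ^ n : E ≃L[𝕜] E) : E →L[𝕜] E)‖ ≤ M) (n : ℕ) (x : E) :
    ‖x‖ ≤ M * ‖((T : E →L[𝕜] E) ^ n) x‖ := by
  have hx : (T ^ (-(n : ℤ))) ((T ^ (n : ℤ)) x) = x := by
    rw [zpow_neg]
    exact (T ^ (n : ℤ)).symm_apply_apply x
  rw [← coe_zpow_natCast, coe_coe]
  simpa only [coe_coe, hx] using
    ((T ^ (-(n : ℤ)) : E ≃L[𝕜] E) : E →L[𝕜] E).le_of_opNorm_le (hbd _) ((T ^ (n : ℤ)) x)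

end ContinuousLinearEquiv

theorem similar_to_unitary_of_power_bounded
    {H : Type*} [NormedAddCommGroup H] [InnerProductSpace ℂ H] [CompleteSpace H]
    (T : H ≃L[ℂ] H) (M : ℝ) (hM : 0 < M)
    (hbd : ∀ n : ℤ, ‖((T ^ n : H ≃L[ℂ] H) : H →L[ℂ] H)‖ ≤ M) :
    ∃ L : H ≃L[ℂ] H, ∀ x : H, ‖L.symm (T (L x))‖ = ‖x‖ := by
  have hpow : ∀ n : ℕ, ‖(T : H →L[ℂ] H) ^ n‖ ≤ M := fun n => by
    simpa only [ContinuousLinearEquiv.coe_zpow_natCast] using hbd n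
  have hlow : ∀ (n : ℕ) (x : H), (M ^ 2)⁻¹ * ‖x‖ ^ 2 ≤ ‖((T : H →L[ℂ] H) ^ n) x‖ ^ 2 := by
    intro n x
    rw [inv_mul_le_iff₀ (by positivity), ← mul_pow]
    exact pow_le_pow_left₀ (norm_nonneg x) (T.norm_le_mul_norm_pow_apply hbd n x) 2
  obtain ⟨S, hcS, hTS⟩ := exists_algebraMap_le_invariant_operator hpow hlow
  exact exists_conj_isometry_of_isStrictlyPositive
    ((isStrictlyPositive_algebraMap (by positivity)).of_le hcS) fun x => by rw [hTS]
end

section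
/- Let T be a bounded linear operator on a complex Hilbert space H. Suppose there exist constants 0 < m ≤ M such that m²‖x‖² ≤ (1/N)·Σ_{n=0}^{N-1} ‖T^n x‖² ≤ M²‖x‖² for every N ≥ 1 and every x ∈ H. Then T is similar to an isometry. -/
/-!
Put `P n = (T ^ n)⋆ T ^ n`. The hypothesis says that the Cesàro means of `P` lie between `m²` and
`M²` in the Loewner order. So do their own Cesàro means `A N`, and these are moreover
asymptotically invariant under `A ↦ T⋆ A T` in norm: the single means are not, since `P N / N`
need not tend to `0`. By Banach–Alaoglu the bounded sequence `A N` has a limit `S` along an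
ultrafilter in the weak operator topology, which plays the role of a Banach limit: `m² ≤ S` and
`T⋆ S T = S`. Writing `S = R⋆ R` with `R` invertible gives `‖R T x‖ = ‖R x‖`, i.e. `R T R⁻¹` is an
isometry.
-/

open Filter Topology Finset ContinuousLinearMapWOT
open scoped InnerProductSpace

/-- `cesaro u N` is the mean of `u 0, …, u N`, i.e. the paper's mean of order `N + 1`. -/
noncomputable def cesaro {E : Type*} [AddCommGroup E] [Module ℝ E] (u : ℕ → E) (N : ℕ) : E :=
  ((N : ℝ) + 1)⁻¹ • ∑ n ∈ range (N + 1), u n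

section Cesaro
variable {E : Type*}

section Module
variable [AddCommGroup E] [Module ℝ E]

theorem Convex.cesaro_mem {s : Set E} (hs : Convex ℝ s) {u : ℕ → E} (hu : ∀ n, u n ∈ s)
    (N : ℕ) : cesaro u N ∈ s := by
  rw [cesaro, smul_sum]
  refine hs.sum_mem (fun _ _ => by positivity) ?_ fun n _ => hu n
  simp only [sum_const, card_range, nsmul_eq_mul]
  push_cast
  field_simp

theorem map_cesaro {F 𝓕 : Type*} [AddCommGroup F] [Module ℝ F] [FunLike 𝓕 E F]
    [LinearMapClass 𝓕 ℝ E F] (f : 𝓕) (u : ℕ → E) (N : ℕ) :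
    f (cesaro u N) = cesaro (fun n => f (u n)) N := by
  simp [cesaro, map_sum]

theorem cesaro_add (u v : ℕ → E) (N : ℕ) :
    cesaro (fun n => u n + v n) N = cesaro u N + cesaro v N := by
  simp [cesaro, sum_add_distrib, smul_add]

theorem cesaro_succ_sub (u : ℕ → E) (N : ℕ) :
    cesaro (fun n => u (n + 1)) N - cesaro u N = ((N : ℝ) + 1)⁻¹ • (u (N + 1) - u 0) := by
  rw [cesaro, cesaro, ← smul_sub, ← sum_sub_distrib, sum_range_sub]

theorem cesaro_succ (u : ℕ → E) (N : ℕ) :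
    cesaro (fun n => u (n + 1)) N =
      cesaro u (N + 1) + ((N : ℝ) + 1)⁻¹ • (cesaro u (N + 1) - u 0) := by
  have hsum := sum_range_succ' u (N + 1)
  simp only [cesaro, Nat.cast_add, Nat.cast_one] at *
  rw [hsum]
  have h1 : (N : ℝ) + 1 ≠ 0 := by positivity
  have h2 : (N : ℝ) + 1 + 1 ≠ 0 := by positivity
  match_scalars <;> field_simp; ring

end Module

variable [NormedAddCommGroup E] [NormedSpace ℝ E]

theorem tendsto_cesaro_of_tendsto {u : ℕ → E} {l : E} (h : Tendsto u atTop (𝓝 l)) :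
    Tendsto (cesaro u) atTop (𝓝 l) := by
  refine (h.cesaro_smul.comp (tendsto_add_atTop_nat 1)).congr fun N => ?_
  simp [cesaro]

theorem tendsto_cesaro_cesaro_succ_sub {u : ℕ → E} {C : ℝ} (hu : ∀ N, ‖cesaro u N‖ ≤ C) :
    Tendsto (fun N => cesaro (cesaro fun n => u (n + 1)) N - cesaro (cesaro u) N)
      atTop (𝓝 0) := by
  set r : ℕ → E := fun N => ((N : ℝ) + 1)⁻¹ • (cesaro u (N + 1) - u 0)
  have hdecomp : ∀ N, cesaro (cesaro fun n => u (n + 1)) N - cesaro (cesaro u) N =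
      ((N : ℝ) + 1)⁻¹ • (cesaro u (N + 1) - cesaro u 0) + cesaro r N := by
    intro N
    rw [funext (cesaro_succ u), cesaro_add, ← cesaro_succ_sub (cesaro u) N]
    abel
  have hinv : Tendsto (fun N : ℕ => ((N : ℝ) + 1)⁻¹) atTop (𝓝 0) := by
    simpa using tendsto_one_div_add_atTop_nhds_zero_nat (𝕜 := ℝ)
  have hbdd : ∀ v : ℕ → E, ∀ D, (∀ N, ‖v N‖ ≤ D) →
      Tendsto (fun N : ℕ => ((N : ℝ) + 1)⁻¹ • v N) atTop (𝓝 0) :=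
    fun v D hv => hinv.zero_smul_isBoundedUnder_le ⟨D, eventually_map.2 (.of_forall hv)⟩
  have hr : Tendsto r atTop (𝓝 0) :=
    hbdd _ (C + ‖u 0‖) fun N => (norm_sub_le _ _).trans (by gcongr; exact hu _)
  simpa [hdecomp] using (hbdd _ (C + C) fun N => (norm_sub_le _ _).trans
    (add_le_add (hu _) (hu _))).add (tendsto_cesaro_of_tendsto hr)

end Cesaro

namespace ContinuousLinearMapWOT

variable {𝕜 E F : Type*} [RCLike 𝕜] [NormedAddCommGroup E] [NormedSpace 𝕜 E]
  [NormedAddCommGroup F] [InnerProductSpace 𝕜 F] [CompleteSpace F]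

theorem exists_tendsto_ofCLM_of_norm_le {ι : Type*} (U : Ultrafilter ι) (A : ι → E →L[𝕜] F)
    {C : ℝ} (hA : ∀ i, ‖A i‖ ≤ C) :
    ∃ S : E →L[𝕜] F, Tendsto (fun i => ofCLM (A i)) U (𝓝 (ofCLM S)) := by
  have hlim : ∀ x, ∃ v : F, ‖v‖ ≤ C * ‖x‖ ∧
      ∀ y, Tendsto (fun i => ⟪A i x, y⟫_𝕜) U (𝓝 ⟪v, y⟫_𝕜) := by
    intro x
    let φ : ι → WeakDual 𝕜 F := fun i =>
      StrongDual.toWeakDual (InnerProductSpace.toDual 𝕜 F (A i x))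
    have hball : ∀ i, φ i ∈ WeakDual.toStrongDual ⁻¹' Metric.closedBall 0 (C * ‖x‖) :=
      fun i => by simpa [φ] using (A i).le_of_opNorm_le (hA i) x
    obtain ⟨ψ, hψC, hψ⟩ := (WeakDual.isCompact_closedBall 0 (C * ‖x‖)).ultrafilter_le_nhds
      (U.map φ) (le_principal_iff.mpr (Ultrafilter.mem_map.mpr (univ_mem' hball)))
    refine ⟨(InnerProductSpace.toDual 𝕜 F).symm (WeakDual.toStrongDual ψ), by simpa using hψC,
      fun y => ?_⟩
    simpa [φ, Function.comp_def] using ((WeakDual.eval_continuous y).tendsto ψ).comp hψ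
  choose v hvC hv using hlim
  have hv_unique : ∀ x w, (∀ y, Tendsto (fun i => ⟪A i x, y⟫_𝕜) U (𝓝 ⟪w, y⟫_𝕜)) → v x = w :=
    fun x w hw => ext_inner_right 𝕜 fun y => tendsto_nhds_unique (hv x y) (hw y)
  let S : E →L[𝕜] F := LinearMap.mkContinuous
    { toFun := v
      map_add' := fun x x' => hv_unique _ _ fun y => by
        simpa [inner_add_left] using (hv x y).add (hv x' y)
      map_smul' := fun c x => hv_unique _ _ fun y => by
        simpa [inner_smul_left] using (hv x y).const_mul (starRingEnd 𝕜 c) }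
    C hvC
  refine ⟨S, tendsto_iff_forall_inner_apply_tendsto.mpr fun x y => ?_⟩
  simpa [S] using (hv x y).star

end ContinuousLinearMapWOT

theorem re_inner_real_smul_left {E : Type*} [NormedAddCommGroup E] [InnerProductSpace ℂ E]
    (r : ℝ) (x y : E) : RCLike.re ⟪r • x, y⟫_ℂ = r * RCLike.re ⟪x, y⟫_ℂ := by
  rw [RCLike.real_smul_eq_coe_smul (K := ℂ), inner_smul_left]
  simp

theorem ContinuousLinearMap.re_inner_algebraMap_apply {E : Type*} [NormedAddCommGroup E]
    [InnerProductSpace ℂ E] (r : ℝ) (x : E) :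
    RCLike.re ⟪algebraMap ℝ (E →L[ℂ] E) r x, x⟫_ℂ = r * ‖x‖ ^ 2 := by
  rw [Algebra.algebraMap_eq_smul_one, _root_.smul_apply, re_inner_real_smul_left,
    one_apply_eq_self, inner_self_eq_norm_sq]

namespace ContinuousLinearMap

section RCLike
variable {𝕜 H : Type*} [RCLike 𝕜] [NormedAddCommGroup H] [InnerProductSpace 𝕜 H]
  [CompleteSpace H]

theorem le_of_tendsto_ofCLM {ι : Type*} {l : Filter ι} [l.NeBot] {A : ι → H →L[𝕜] H}
    {S a : H →L[𝕜] H} (hA : Tendsto (fun i => ofCLM (A i)) l (𝓝 (ofCLM S)))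
    (hle : ∀ᶠ i in l, a ≤ A i) : a ≤ S := by
  have hlim : Tendsto (fun i => ofCLM (A i - a)) l (𝓝 (ofCLM (S - a))) := hA.sub_const _
  simp only [le_def, isPositive_def'] at hle ⊢
  refine ⟨?_, fun x => ge_of_tendsto ?_ (hle.mono fun i hi => hi.2 x)⟩
  · refine ofCLM_injective (tendsto_nhds_unique hlim.star (hlim.congr' ?_))
    exact hle.mono fun i hi => congrArg ofCLM hi.1.symm
  · have := RCLike.continuous_re.tendsto _ |>.comp
      (tendsto_iff_forall_inner_apply_tendsto.mp hlim x x)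
    simpa [reApplyInnerSelf_apply, inner_re_symm (𝕜 := 𝕜) _ x, Function.comp_def] using this

theorem le_iff_forall_re_inner_le {a b : H →L[𝕜] H} (ha : IsSelfAdjoint a)
    (hb : IsSelfAdjoint b) : a ≤ b ↔ ∀ x, RCLike.re ⟪a x, x⟫_𝕜 ≤ RCLike.re ⟪b x, x⟫_𝕜 := by
  rw [le_def, isPositive_def', and_iff_right (hb.sub ha)]
  simp [reApplyInnerSelf_apply, inner_sub_left]

end RCLike

variable {H : Type*} [NormedAddCommGroup H] [InnerProductSpace ℂ H] [CompleteSpace H]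

theorem norm_apply_eq_of_star_mul_self_eq {A B : H →L[ℂ] H} (h : star A * A = star B * B)
    (x : H) : ‖A x‖ = ‖B x‖ := by
  have hsq := apply_norm_sq_eq_inner_adjoint_left A x
  rw [← star_eq_adjoint, ← mul_def, h, mul_def, star_eq_adjoint,
    ← apply_norm_sq_eq_inner_adjoint_left] at hsq
  exact (pow_left_inj₀ (norm_nonneg _) (norm_nonneg _) two_ne_zero).mp hsq

theorem re_inner_star_mul_self_apply (A : H →L[ℂ] H) (x : H) :
    RCLike.re ⟪(star A * A) x, x⟫_ℂ = ‖A x‖ ^ 2 :=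
  (A.apply_norm_sq_eq_inner_adjoint_left x).symm

end ContinuousLinearMap

section Operator
variable {H : Type*} [NormedAddCommGroup H] [InnerProductSpace ℂ H] [CompleteSpace H]

theorem exists_similar_isometry_of_isStrictlyPositive {T S : H →L[ℂ] H}
    (hS : IsStrictlyPositive S) (hTS : star T * S * T = S) :
    ∃ L : H ≃L[ℂ] H, ∀ x, ‖L.symm (T (L x))‖ = ‖x‖ := by
  obtain ⟨R, ⟨u, rfl⟩, rfl⟩ := (CStarAlgebra.isStrictlyPositive_TFAE.out 0 5).mp hS
  have hnorm : ∀ z, ‖(u : H →L[ℂ] H) (T z)‖ = ‖(u : H →L[ℂ] H) z‖ :=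
    ContinuousLinearMap.norm_apply_eq_of_star_mul_self_eq (A := (u : H →L[ℂ] H) * T) <| by
      rw [← hTS, star_mul]; simp only [mul_assoc]
  refine ⟨(ContinuousLinearEquiv.unitsEquiv ℂ H u).symm, fun x => ?_⟩
  have hx := (ContinuousLinearEquiv.unitsEquiv ℂ H u).apply_symm_apply x
  rw [ContinuousLinearEquiv.symm_symm, ContinuousLinearEquiv.unitsEquiv_apply] at *
  rw [hnorm, hx]

variable (T : H →L[ℂ] H)

theorem star_mul_star_pow_mul_pow_mul (n : ℕ) :
    star T * (star (T ^ n) * T ^ n) * T = star (T ^ (n + 1)) * T ^ (n + 1) := by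
  rw [pow_succ, star_mul]; simp only [mul_assoc]

theorem isSelfAdjoint_cesaro_star_pow_mul_pow (k : ℕ) :
    IsSelfAdjoint (cesaro (fun n => star (T ^ n) * T ^ n) k) :=
  IsSelfAdjoint.smul (.all _) (isSelfAdjoint_sum _ fun n _ => .star_mul_self (T ^ n))

theorem re_inner_cesaro_star_pow_mul_pow (k : ℕ) (x : H) :
    RCLike.re ⟪cesaro (fun n => star (T ^ n) * T ^ n) k x, x⟫_ℂ =
      ((k : ℝ) + 1)⁻¹ * ∑ n ∈ range (k + 1), ‖(T ^ n) x‖ ^ 2 := by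
  simp only [cesaro, _root_.smul_apply, _root_.sum_apply, re_inner_real_smul_left, sum_inner,
    map_sum, ContinuousLinearMap.re_inner_star_mul_self_apply]

theorem exists_isStrictlyPositive_star_mul_mul_eq_self {r C : ℝ} (hr : 0 < r)
    (hlow : ∀ k, algebraMap ℝ _ r ≤ cesaro (fun n => star (T ^ n) * T ^ n) k)
    (hup : ∀ k, ‖cesaro (fun n => star (T ^ n) * T ^ n) k‖ ≤ C) :
    ∃ S : H →L[ℂ] H, IsStrictlyPositive S ∧ star T * S * T = S := by
  set P : ℕ → H →L[ℂ] H := fun n => star (T ^ n) * T ^ n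
  set U : Ultrafilter ℕ := .of atTop
  have hU : (U : Filter ℕ) ≤ atTop := Ultrafilter.of_le _
  obtain ⟨S, hS⟩ := exists_tendsto_ofCLM_of_norm_le U (cesaro (cesaro P)) fun N =>
    mem_closedBall_zero_iff.mp <| (convex_closedBall 0 C).cesaro_mem
      (fun k => mem_closedBall_zero_iff.mpr (hup k)) N
  have hlowS : algebraMap ℝ _ r ≤ S :=
    ContinuousLinearMap.le_of_tendsto_ofCLM hS <| .of_forall fun N =>
      Set.mem_Ici.mp <| (convex_Ici _).cesaro_mem (fun k => Set.mem_Ici.mpr (hlow k)) N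
  refine ⟨S, (isStrictlyPositive_algebraMap hr).of_le hlowS, ?_⟩
  have hconj : ∀ N, star T * cesaro (cesaro P) N * T = cesaro (cesaro fun n => P (n + 1)) N := by
    have hmap (v : ℕ → H →L[ℂ] H) (N : ℕ) :
        star T * cesaro v N * T = cesaro (fun n => star T * v n * T) N := by
      simpa using map_cesaro (LinearMap.mulLeftRight ℝ (star T, T)) v N
    intro N
    simp only [hmap, P, star_mul_star_pow_mul_pow_mul]
  have hlim₁ : Tendsto (fun N => ofCLM (star T * cesaro (cesaro P) N * T)) U
      (𝓝 (ofCLM (star T * S * T))) := by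
    simpa using (hS.const_mul (ofCLM (star T))).mul_const (ofCLM T)
  have hlim₂ : Tendsto (fun N => ofCLM (star T * cesaro (cesaro P) N * T)) U (𝓝 (ofCLM S)) := by
    have hdiff := (continuous_ofCLM.tendsto 0).comp
      ((tendsto_cesaro_cesaro_succ_sub hup).mono_left hU)
    simpa [hconj, Function.comp_def] using hS.add hdiff
  exact ofCLM_injective (tendsto_nhds_unique hlim₁ hlim₂)

end Operator

theorem similar_to_isometry_of_cesaro_bounds_general
    {H : Type*} [NormedAddCommGroup H] [InnerProductSpace ℂ H] [CompleteSpace H]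
    (T : H →L[ℂ] H) (m M : ℝ) (hm : 0 < m)
    (hbd : ∀ N : ℕ, 1 ≤ N → ∀ x : H,
      m ^ 2 * ‖x‖ ^ 2 ≤ (1 / (N : ℝ)) * ∑ n ∈ Finset.range N, ‖(T ^ n) x‖ ^ 2 ∧
      (1 / (N : ℝ)) * ∑ n ∈ Finset.range N, ‖(T ^ n) x‖ ^ 2 ≤ M ^ 2 * ‖x‖ ^ 2) :
    ∃ L : H ≃L[ℂ] H, ∀ x : H, ‖L.symm (T (L x))‖ = ‖x‖ := by
  set P : ℕ → H →L[ℂ] H := fun n => star (T ^ n) * T ^ n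
  have hP : ∀ k x, m ^ 2 * ‖x‖ ^ 2 ≤ RCLike.re ⟪cesaro P k x, x⟫_ℂ ∧
      RCLike.re ⟪cesaro P k x, x⟫_ℂ ≤ M ^ 2 * ‖x‖ ^ 2 := fun k x => by
    rw [re_inner_cesaro_star_pow_mul_pow]
    simpa [one_div] using hbd (k + 1) (by omega) x
  have hsa := isSelfAdjoint_cesaro_star_pow_mul_pow T
  have hlow : ∀ k, algebraMap ℝ _ (m ^ 2) ≤ cesaro P k := fun k =>
    (ContinuousLinearMap.le_iff_forall_re_inner_le (.algebraMap _ (.all _)) (hsa k)).mpr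
      fun x => by rw [ContinuousLinearMap.re_inner_algebraMap_apply]; exact (hP k x).1
  have hup : ∀ k, cesaro P k ≤ algebraMap ℝ _ (M ^ 2) := fun k =>
    (ContinuousLinearMap.le_iff_forall_re_inner_le (hsa k) (.algebraMap _ (.all _))).mpr
      fun x => by rw [ContinuousLinearMap.re_inner_algebraMap_apply]; exact (hP k x).2
  have hnorm : ∀ k, ‖cesaro P k‖ ≤ M ^ 2 := fun k =>
    (CStarAlgebra.norm_le_iff_le_algebraMap _ (sq_nonneg M)
      ((algebraMap_nonneg _ (sq_nonneg m)).trans (hlow k))).mpr (hup k)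
  obtain ⟨S, hS, hTS⟩ := exists_isStrictlyPositive_star_mul_mul_eq_self T (pow_pos hm 2) hlow hnorm
  exact exists_similar_isometry_of_isStrictlyPositive hS hTS

theorem similar_to_isometry_of_cesaro_bounds
    {H : Type*} [NormedAddCommGroup H] [InnerProductSpace ℂ H] [CompleteSpace H]
    (T : H →L[ℂ] H) (m M : ℝ) (hm : 0 < m) (hmM : m ≤ M)
    (hbd : ∀ N : ℕ, 1 ≤ N → ∀ x : H,
      m ^ 2 * ‖x‖ ^ 2 ≤ (1 / (N : ℝ)) * ∑ n ∈ Finset.range N, ‖(T ^ n) x‖ ^ 2 ∧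
      (1 / (N : ℝ)) * ∑ n ∈ Finset.range N, ‖(T ^ n) x‖ ^ 2 ≤ M ^ 2 * ‖x‖ ^ 2) :
    ∃ L : H ≃L[ℂ] H, ∀ x : H, ‖L.symm (T (L x))‖ = ‖x‖ :=
  similar_to_isometry_of_cesaro_bounds_general T m M hm hbd
end

section
/- Let S be a countable discrete semigroup with a right Følner sequence (F_N) of finite nonempty subsets, i.e. |F_N s △ F_N|/|F_N| → 0 for every s ∈ S. Let π : S → B(H) be a representation (π(st) = π(s)π(t)) such that for positive constants m, M: m²‖x‖² ≤ (1/|F_N|)·Σ_{g ∈ F_N} ‖π(g)x‖² ≤ M²‖x‖² for all N and all x ∈ H, and (1/|F_N|)·Σ_{g ∈ F_N s △ F_N} ‖π(g)‖² → 0 as N → ∞ for every s ∈ S. Then there exists an invertible L ∈ B(H) with ‖L⁻¹‖·‖L‖ ≤ M/m such that L⁻¹π(s)L is an isometry for every s ∈ S. -/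
/-!
Average the Gram operators `(1/|F_N|) ∑_{g ∈ F_N} π(g)* π(g)` along an ultrafilter finer than
`atTop`; weak compactness of bounded sets of operators gives a weak limit `G`, and
`m² ≤ G ≤ M²`. The Følner condition together with the decay of `∑ ‖π g‖²` over `F_N s △ F_N`
makes the quadratic form `q x = ⟪G x, x⟫` subinvariant, `q x ≤ q (π s x)`; comparing `q` with the
averages on the large set `F_N ∩ F_N s` this forces `π` to be uniformly bounded, and then the Følner
condition alone upgrades subinvariance to invariance. Hence `√G` is invertible and conjugates
every `π s` to an isometry, with `‖√G‖ ≤ M` and `‖(√G)⁻¹‖ ≤ 1/m`; take `L = (√G)⁻¹`.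
-/

open Filter Topology Metric Finset InnerProductSpace ContinuousLinearMap
open scoped symmDiff

section TranslatedSums

variable {S : Type*} [DecidableEq S] (F : Finset S) (σ : S → S) {f : S → ℝ}

theorem card_le_card_inter_image_add_card_symmDiff :
    #F ≤ #(F ∩ F.image σ) + #(F.image σ ∆ F) := by
  rw [← card_inter_add_card_sdiff F (F.image σ)]
  exact Nat.add_le_add_left (card_le_card subset_union_right) _

theorem sum_le_sum_comp_add_sum_sdiff_image (hf : ∀ g, 0 ≤ f g) :
    ∑ g ∈ F, f g ≤ ∑ g ∈ F, f (σ g) + ∑ g ∈ F \ F.image σ, f g :=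
  calc ∑ g ∈ F, f g = ∑ g ∈ F ∩ F.image σ, f g + ∑ g ∈ F \ F.image σ, f g :=
        (sum_inter_add_sum_sdiff _ _ _).symm
    _ ≤ ∑ g ∈ F.image σ, f g + ∑ g ∈ F \ F.image σ, f g := by
        gcongr
        · exact fun g _ _ => hf g
        · exact inter_subset_right
    _ ≤ ∑ g ∈ F, f (σ g) + ∑ g ∈ F \ F.image σ, f g := by
        gcongr
        exact sum_image_le_of_nonneg fun g _ => hf g

theorem sum_comp_le_sum_add_mul_card_symmDiff {C : ℝ} (hf₀ : ∀ g, 0 ≤ f g) (hfC : ∀ g, f g ≤ C) :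
    ∑ g ∈ F, f (σ g) ≤ ∑ g ∈ F, f g + C * #(F.image σ ∆ F) := by
  rcases F.eq_empty_or_nonempty with rfl | ⟨g₀, -⟩
  · simp
  have hC : 0 ≤ C := (hf₀ g₀).trans (hfC g₀)
  set I := F.image σ
  set n : S → ℝ := fun h => #{g ∈ F | σ g = h}
  -- each `h ∈ I` is hit `n h ≥ 1` times; the surplus hits number `#F - #I ≤ #(F \ I)`
  have hn : ∀ h ∈ I, 1 ≤ n h := fun h hh => by
    obtain ⟨g, hg, rfl⟩ := mem_image.mp hh
    exact Nat.one_le_cast.mpr (card_pos.mpr ⟨g, mem_filter.mpr ⟨hg, rfl⟩⟩)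
  have hfiber : ∑ g ∈ F, f (σ g) = ∑ h ∈ I, f h + ∑ h ∈ I, (n h - 1) * f h := by
    rw [sum_comp, ← sum_add_distrib]
    exact sum_congr rfl fun h _ => by rw [nsmul_eq_mul]; ring
  have hsurplus_card : ∑ h ∈ I, (n h - 1) ≤ #(F \ I) := by
    have hF : (#F : ℝ) = ∑ h ∈ I, n h := by
      simp only [n]; exact_mod_cast card_eq_sum_card_image σ F
    have : (#F : ℝ) ≤ #(F \ I) + #I := by exact_mod_cast card_le_card_sdiff_add_card
    rw [sum_sub_distrib, sum_const, nsmul_one]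
    linarith
  have hsurplus : ∑ h ∈ I, (n h - 1) * f h ≤ C * #(F \ I) :=
    calc ∑ h ∈ I, (n h - 1) * f h ≤ ∑ h ∈ I, (n h - 1) * C :=
          sum_le_sum fun h hh => mul_le_mul_of_nonneg_left (hfC h) (sub_nonneg.mpr (hn h hh))
      _ ≤ C * #(F \ I) := by rw [← sum_mul, mul_comm]; gcongr
  have hI : ∑ h ∈ I, f h ≤ ∑ g ∈ F, f g + C * #(I \ F) :=
    calc ∑ h ∈ I, f h = ∑ h ∈ I ∩ F, f h + ∑ h ∈ I \ F, f h := (sum_inter_add_sum_sdiff _ _ _).symm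
      _ ≤ ∑ g ∈ F, f g + ∑ _h ∈ I \ F, C := by
          gcongr with h
          · exact fun g _ _ => hf₀ g
          · exact inter_subset_right
          · exact hfC _
      _ = ∑ g ∈ F, f g + C * #(I \ F) := by rw [sum_const, nsmul_eq_mul, mul_comm]
  rw [hfiber, symmDiff_def, sup_eq_union, card_union_of_disjoint disjoint_sdiff_sdiff]
  push_cast
  linarith

end TranslatedSums

theorem exists_two_mul_lt_of_tendsto_div {ι : Type*} {l : Filter ι} [l.NeBot] {a b : ι → ℕ}
    (hb : ∀ i, 0 < b i) (h : Tendsto (fun i => (a i : ℝ) / b i) l (𝓝 0)) : ∃ i, 2 * a i < b i := by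
  obtain ⟨i, hi⟩ := (h.eventually (gt_mem_nhds one_half_pos)).exists
  rw [div_lt_iff₀ (by exact_mod_cast hb i)] at hi
  exact ⟨i, by exact_mod_cast (by linarith : (2 * a i : ℝ) < b i)⟩

section WeakCompactness

variable {𝕜 E ι : Type*} [RCLike 𝕜] [NormedAddCommGroup E] [InnerProductSpace 𝕜 E]
  [CompleteSpace E] (U : Ultrafilter ι)

theorem exists_tendsto_inner_of_norm_le {v : ι → E} {r : ℝ} (hv : ∀ i, ‖v i‖ ≤ r) :
    ∃ w : E, ‖w‖ ≤ r ∧ ∀ y, Tendsto (fun i => ⟪v i, y⟫_𝕜) U (𝓝 ⟪w, y⟫_𝕜) := by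
  -- Banach–Alaoglu for the functionals `⟪v i, ·⟫`, then Riesz representation
  set K := ((⇑) : StrongDual 𝕜 E → E → 𝕜) '' closedBall 0 r
  have hK : IsCompact K := ContinuousLinearMap.isCompact_image_coe_closedBall 0 r
  have hvK : ∀ i, ⇑(toDual 𝕜 E (v i)) ∈ K := fun i =>
    ⟨_, by simpa using hv i, rfl⟩
  obtain ⟨_, ⟨ψ, hψ, rfl⟩, hlim⟩ := hK.ultrafilter_le_nhds (U.map fun i => ⇑(toDual 𝕜 E (v i)))
    (le_principal_iff.mpr (Ultrafilter.mem_map.mpr (univ_mem' hvK)))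
  refine ⟨(toDual 𝕜 E).symm ψ, by simpa using hψ, fun y => ?_⟩
  rw [toDual_symm_apply]
  exact (tendsto_pi_nhds.mp hlim y).congr fun i => toDual_apply_apply

theorem exists_tendsto_inner_apply_of_norm_le {T : ι → E →L[𝕜] E} {C : ℝ} (hT : ∀ i, ‖T i‖ ≤ C) :
    ∃ G : E →L[𝕜] E, ∀ x y, Tendsto (fun i => ⟪T i x, y⟫_𝕜) U (𝓝 ⟪G x, y⟫_𝕜) := by
  choose w hw_norm hw using fun x =>
    exists_tendsto_inner_of_norm_le (𝕜 := 𝕜) U fun i => (T i).le_of_opNorm_le (hT i) x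
  have hw_add : ∀ x x', w (x + x') = w x + w x' := fun x x' =>
    ext_inner_right 𝕜 fun y => tendsto_nhds_unique (hw (x + x') y) <| by
      simpa only [map_add, inner_add_left] using (hw x y).add (hw x' y)
  have hw_smul : ∀ (a : 𝕜) x, w (a • x) = a • w x := fun a x =>
    ext_inner_right 𝕜 fun y => tendsto_nhds_unique (hw (a • x) y) <| by
      simpa only [map_smul, inner_smul_left] using (hw x y).const_mul (starRingEnd 𝕜 a)
  exact ⟨LinearMap.mkContinuous ⟨⟨w, hw_add⟩, hw_smul⟩ C hw_norm, hw⟩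

end WeakCompactness

section PositiveOperators

variable {H : Type*} [NormedAddCommGroup H] [InnerProductSpace ℂ H]
  {T : H →L[ℂ] H} {q : H → ℝ}

theorem isPositive_of_inner_apply_self_eq (hT : ∀ x, ⟪T x, x⟫_ℂ = q x) (hq : ∀ x, 0 ≤ q x) :
    T.IsPositive :=
  (isPositive_iff_complex T).mpr fun x => by simp [hT x, hq x]

theorem inner_sub_algebraMap_apply_self (hT : ∀ x, ⟪T x, x⟫_ℂ = q x) (a : ℝ) (x : H) :
    ⟪(T - algebraMap ℝ (H →L[ℂ] H) a) x, x⟫_ℂ = ((q x - a * ‖x‖ ^ 2 : ℝ) : ℂ) := by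
  simp [hT x, inner_self_eq_norm_sq_to_K, Algebra.algebraMap_eq_smul_one]

theorem algebraMap_le_of_le_inner (hT : ∀ x, ⟪T x, x⟫_ℂ = q x) {a : ℝ}
    (hq : ∀ x, a * ‖x‖ ^ 2 ≤ q x) : algebraMap ℝ (H →L[ℂ] H) a ≤ T :=
  (le_def _ _).mpr <| isPositive_of_inner_apply_self_eq (inner_sub_algebraMap_apply_self hT a)
    fun x => sub_nonneg.mpr (hq x)

theorem le_algebraMap_of_inner_le (hT : ∀ x, ⟪T x, x⟫_ℂ = q x) {b : ℝ}
    (hq : ∀ x, q x ≤ b * ‖x‖ ^ 2) : T ≤ algebraMap ℝ (H →L[ℂ] H) b := by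
  refine (le_def _ _).mpr <| isPositive_of_inner_apply_self_eq (q := fun x => b * ‖x‖ ^ 2 - q x)
    (fun x => ?_) fun x => sub_nonneg.mpr (hq x)
  rw [← neg_sub, neg_apply, inner_neg_left, inner_sub_algebraMap_apply_self hT]
  push_cast; ring

variable [CompleteSpace H]

theorem norm_le_of_inner_le (hT : ∀ x, ⟪T x, x⟫_ℂ = q x) (hq₀ : ∀ x, 0 ≤ q x) {b : ℝ}
    (hb : 0 ≤ b) (hq : ∀ x, q x ≤ b * ‖x‖ ^ 2) : ‖T‖ ≤ b :=
  (CStarAlgebra.norm_le_iff_le_algebraMap T hb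
    ((nonneg_iff_isPositive T).mpr (isPositive_of_inner_apply_self_eq hT hq₀))).mpr
    (le_algebraMap_of_inner_le hT hq)

theorem exists_equiv_norm_sq_eq (hT : ∀ x, ⟪T x, x⟫_ℂ = q x) {a : ℝ} (ha : 0 < a)
    (hq : ∀ x, a * ‖x‖ ^ 2 ≤ q x) : ∃ R : H ≃L[ℂ] H, ∀ x, ‖R x‖ ^ 2 = q x := by
  have hpos : IsStrictlyPositive T :=
    (isStrictlyPositive_algebraMap ha).of_le (algebraMap_le_of_le_inner hT hq)
  have hsa : IsSelfAdjoint (CFC.sqrt T) := IsSelfAdjoint.of_nonneg (CFC.sqrt_nonneg T)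
  refine ⟨ContinuousLinearEquiv.unitsEquiv ℂ H (hpos.isUnit_cfcSqrt).unit, fun x => ?_⟩
  -- `‖√T x‖² = ⟪√T* √T x, x⟫ = ⟪T x, x⟫`
  have h := apply_norm_sq_eq_inner_adjoint_left (CFC.sqrt T) x
  rw [← star_eq_adjoint, hsa.star_eq, ← ContinuousLinearMap.mul_def,
    CFC.sqrt_mul_sqrt_self T hpos.nonneg, hT x] at h
  simpa using h

theorem exists_equiv_isometry_of_invariant (hT : ∀ x, ⟪T x, x⟫_ℂ = q x) {m M : ℝ} (hm : 0 < m)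
    (hM : 0 ≤ M) (hq_lb : ∀ x, m ^ 2 * ‖x‖ ^ 2 ≤ q x) (hq_ub : ∀ x, q x ≤ M ^ 2 * ‖x‖ ^ 2)
    {ι : Type*} (V : ι → H →L[ℂ] H) (hV : ∀ i x, q (V i x) = q x) :
    ∃ L : H ≃L[ℂ] H, ‖(L.symm : H →L[ℂ] H)‖ * ‖(L : H →L[ℂ] H)‖ ≤ M / m ∧
      ∀ i x, ‖L.symm (V i (L x))‖ = ‖x‖ := by
  obtain ⟨R, hR⟩ := exists_equiv_norm_sq_eq hT (pow_pos hm 2) hq_lb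
  have hR_lb : ∀ x, m * ‖x‖ ≤ ‖R x‖ := fun x =>
    pow_le_pow_iff_left₀ (by positivity) (norm_nonneg _) two_ne_zero |>.mp
      (by rw [mul_pow, hR]; exact hq_lb x)
  have hR_ub : ∀ x, ‖R x‖ ≤ M * ‖x‖ := fun x =>
    pow_le_pow_iff_left₀ (norm_nonneg _) (by positivity) two_ne_zero |>.mp
      (by rw [mul_pow, hR]; exact hq_ub x)
  refine ⟨R.symm, ?_, fun i x => ?_⟩
  · have hsymm : ‖(R.symm : H →L[ℂ] H)‖ ≤ m⁻¹ := opNorm_le_bound _ (by positivity) fun x => by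
      rw [inv_mul_eq_div, le_div_iff₀ hm, mul_comm]
      simpa using hR_lb (R.symm x)
    calc ‖(R.symm.symm : H →L[ℂ] H)‖ * ‖(R.symm : H →L[ℂ] H)‖ ≤ M * m⁻¹ :=
          mul_le_mul (opNorm_le_bound _ hM hR_ub) hsymm (norm_nonneg _) hM
      _ = M / m := (div_eq_mul_inv M m).symm
  · rw [R.symm_symm, ← pow_left_inj₀ (norm_nonneg _) (norm_nonneg _) two_ne_zero, hR, hV, ← hR,
      R.apply_symm_apply]

end PositiveOperators

section CesaroMeans

variable {S H : Type*} [NormedAddCommGroup H] [InnerProductSpace ℂ H]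

noncomputable def cesaroNormSq (π : S → H →L[ℂ] H) (F : Finset S) (x : H) : ℝ :=
  (1 / (#F : ℝ)) * ∑ g ∈ F, ‖π g x‖ ^ 2

noncomputable def cesaroGram [CompleteSpace H] (π : S → H →L[ℂ] H) (F : Finset S) : H →L[ℂ] H :=
  (1 / (#F : ℝ)) • ∑ g ∈ F, adjoint (π g) ∘L π g

theorem inner_cesaroGram_apply_self [CompleteSpace H] (π : S → H →L[ℂ] H) (F : Finset S)
    (x : H) : ⟪cesaroGram π F x, x⟫_ℂ = cesaroNormSq π F x := by
  simp [cesaroGram, cesaroNormSq, adjoint_inner_left, inner_self_eq_norm_sq_to_K]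

theorem exists_tendsto_cesaroNormSq [CompleteSpace H] {π : S → H →L[ℂ] H} {ι : Type*}
    (U : Ultrafilter ι) (F : ι → Finset S) {M : ℝ} (hmean : ∀ i x, cesaroNormSq π (F i) x ≤ M ^ 2 * ‖x‖ ^ 2) :
    ∃ G : H →L[ℂ] H, ∃ q : H → ℝ,
      (∀ x, ⟪G x, x⟫_ℂ = q x) ∧ ∀ x, Tendsto (fun i => cesaroNormSq π (F i) x) U (𝓝 (q x)) := by
  obtain ⟨G, hG⟩ := exists_tendsto_inner_apply_of_norm_le U (T := fun i => cesaroGram π (F i))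
    fun i => norm_le_of_inner_le (inner_cesaroGram_apply_self π (F i))
      (fun x => by unfold cesaroNormSq; positivity) (sq_nonneg M) (hmean i)
  have hGx : ∀ x, Tendsto (fun i => (cesaroNormSq π (F i) x : ℂ)) U (𝓝 ⟪G x, x⟫_ℂ) := fun x => by
    simpa only [inner_cesaroGram_apply_self] using hG x x
  refine ⟨G, fun x => RCLike.re ⟪G x, x⟫_ℂ, fun x => ?_, fun x => ?_⟩
  · refine tendsto_nhds_unique (hGx x) ?_
    exact (((Complex.continuous_ofReal.comp Complex.continuous_re).tendsto _).comp (hGx x)).congr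
      fun i => by simp
  · exact ((Complex.continuous_re.tendsto _).comp (hGx x)).congr fun i => by simp

end CesaroMeans

section Representation

variable {S H : Type*} [Semigroup S] [DecidableEq S] [NormedAddCommGroup H] [InnerProductSpace ℂ H]
  {π : S → H →L[ℂ] H}

theorem sum_norm_sq_apply_le (hrep : ∀ s t, π (s * t) = π s ∘L π t) (F : Finset S) (s : S) (x : H) :
    ∑ g ∈ F, ‖π g x‖ ^ 2 ≤
      ∑ g ∈ F, ‖π g (π s x)‖ ^ 2 + ‖x‖ ^ 2 * ∑ g ∈ F.image (· * s) ∆ F, ‖π g‖ ^ 2 := by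
  have hmain := sum_le_sum_comp_add_sum_sdiff_image F (· * s) (f := fun g => ‖π g x‖ ^ 2)
    fun g => by positivity
  simp only [hrep, comp_apply] at hmain
  refine hmain.trans (add_le_add_right ?_ _)
  calc ∑ g ∈ F \ F.image (· * s), ‖π g x‖ ^ 2
      ≤ ∑ g ∈ F \ F.image (· * s), ‖π g‖ ^ 2 * ‖x‖ ^ 2 := sum_le_sum fun g _ => by
        rw [← mul_pow]; exact pow_le_pow_left₀ (norm_nonneg _) ((π g).le_opNorm x) 2
    _ ≤ ∑ g ∈ F.image (· * s) ∆ F, ‖π g‖ ^ 2 * ‖x‖ ^ 2 :=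
        sum_le_sum_of_subset_of_nonneg subset_union_right fun g _ _ => by positivity
    _ = ‖x‖ ^ 2 * ∑ g ∈ F.image (· * s) ∆ F, ‖π g‖ ^ 2 := by rw [← sum_mul, mul_comm]

variable {l : Filter ℕ} {F : ℕ → Finset S} {q : H → ℝ}

theorem le_apply_of_tendsto_cesaroNormSq (hrep : ∀ s t, π (s * t) = π s ∘L π t) [l.NeBot]
    (hq : ∀ x, Tendsto (fun N => cesaroNormSq π (F N) x) l (𝓝 (q x)))
    (hsd : ∀ s, Tendsto (fun N => (1 / (#(F N) : ℝ)) *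
      ∑ g ∈ (F N).image (· * s) ∆ F N, ‖π g‖ ^ 2) l (𝓝 0)) (s : S) (x : H) :
    q x ≤ q (π s x) := by
  have hN : ∀ N, cesaroNormSq π (F N) x ≤ cesaroNormSq π (F N) (π s x) +
      ‖x‖ ^ 2 * ((1 / (#(F N) : ℝ)) * ∑ g ∈ (F N).image (· * s) ∆ F N, ‖π g‖ ^ 2) := fun N => by
    have := mul_le_mul_of_nonneg_left (sum_norm_sq_apply_le hrep (F N) s x)
      (by positivity : (0 : ℝ) ≤ 1 / #(F N))
    simp only [cesaroNormSq]
    linarith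
  simpa using le_of_tendsto_of_tendsto' (hq x) ((hq (π s x)).add ((hsd s).const_mul _)) hN

theorem norm_sq_apply_le_of_le_apply (hrep : ∀ s t, π (s * t) = π s ∘L π t) {F : Finset S}
    {s : S} (hF : 2 * #(F.image (· * s) ∆ F) < #F) {m M : ℝ} (hm : 0 < m)
    (hmean : ∀ x, cesaroNormSq π F x ≤ M ^ 2 * ‖x‖ ^ 2)
    (hq_lb : ∀ x, m ^ 2 * ‖x‖ ^ 2 ≤ q x) (hq_ub : ∀ x, q x ≤ M ^ 2 * ‖x‖ ^ 2)
    (hsub : ∀ s x, q x ≤ q (π s x)) (x : H) :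
    ‖π s x‖ ^ 2 ≤ 2 * M ^ 4 / m ^ 2 * ‖x‖ ^ 2 := by
  have hI : #F ≤ 2 * #(F ∩ F.image (· * s)) := by
    have := card_le_card_inter_image_add_card_symmDiff F (· * s)
    omega
  set I := F ∩ F.image (· * s)
  have hFpos : (0 : ℝ) < #F := by exact_mod_cast hF.trans_le' (Nat.zero_le _)
  have hpt : ∀ t ∈ I, m ^ 2 * ‖π s x‖ ^ 2 ≤ M ^ 2 * ‖π t x‖ ^ 2 := by
    intro t ht
    obtain ⟨g, -, rfl⟩ := mem_image.mp (mem_inter.mp ht).2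
    calc m ^ 2 * ‖π s x‖ ^ 2 ≤ q (π s x) := hq_lb _
      _ ≤ q (π g (π s x)) := hsub g _
      _ ≤ M ^ 2 * ‖π (g * s) x‖ ^ 2 := by rw [hrep]; exact hq_ub _
  have hsum : ∑ t ∈ F, ‖π t x‖ ^ 2 ≤ #F * (M ^ 2 * ‖x‖ ^ 2) := by
    have := hmean x
    rwa [cesaroNormSq, one_div_mul_eq_div, div_le_iff₀ hFpos, mul_comm] at this
  have hI_pos : (0 : ℝ) < #I := by
    have : (#F : ℝ) ≤ 2 * #I := by exact_mod_cast hI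
    linarith
  have : #I * (m ^ 2 * ‖π s x‖ ^ 2) ≤ #I * (2 * M ^ 4 * ‖x‖ ^ 2) :=
    calc #I * (m ^ 2 * ‖π s x‖ ^ 2) ≤ M ^ 2 * ∑ t ∈ I, ‖π t x‖ ^ 2 := by
          rw [mul_sum, ← nsmul_eq_mul]; exact card_nsmul_le_sum I _ _ hpt
      _ ≤ M ^ 2 * ∑ t ∈ F, ‖π t x‖ ^ 2 := by
          exact mul_le_mul_of_nonneg_left (sum_le_sum_of_subset_of_nonneg inter_subset_left
            fun _ _ _ => by positivity) (by positivity)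
      _ ≤ M ^ 2 * (#F * (M ^ 2 * ‖x‖ ^ 2)) := by gcongr
      _ ≤ M ^ 2 * (2 * #I * (M ^ 2 * ‖x‖ ^ 2)) := by gcongr; exact_mod_cast hI
      _ = #I * (2 * M ^ 4 * ‖x‖ ^ 2) := by ring
  rw [div_mul_eq_mul_div, le_div_iff₀ (by positivity), mul_comm]
  exact le_of_mul_le_mul_left this hI_pos

theorem apply_eq_of_tendsto_cesaroNormSq (hrep : ∀ s t, π (s * t) = π s ∘L π t) [l.NeBot]
    {K : ℝ} (hK : ∀ s x, ‖π s x‖ ^ 2 ≤ K * ‖x‖ ^ 2)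
    (hFolner : ∀ s, Tendsto (fun N => (#((F N).image (· * s) ∆ F N) : ℝ) / #(F N)) l (𝓝 0))
    (hq : ∀ x, Tendsto (fun N => cesaroNormSq π (F N) x) l (𝓝 (q x)))
    (hsub : ∀ s x, q x ≤ q (π s x)) (s : S) (x : H) : q (π s x) = q x := by
  refine le_antisymm ?_ (hsub s x)
  have hN : ∀ N, cesaroNormSq π (F N) (π s x) ≤ cesaroNormSq π (F N) x +
      K * ‖x‖ ^ 2 * ((#((F N).image (· * s) ∆ F N) : ℝ) / #(F N)) := fun N => by
    have := sum_comp_le_sum_add_mul_card_symmDiff (F N) (· * s) (f := fun g => ‖π g x‖ ^ 2)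
      (fun g => by positivity) (fun g => hK g x)
    simp only [hrep, comp_apply] at this
    have := mul_le_mul_of_nonneg_left this (by positivity : (0 : ℝ) ≤ 1 / #(F N))
    exact this.trans_eq (by rw [cesaroNormSq]; ring)
  simpa using le_of_tendsto_of_tendsto' (hq (π s x)) ((hq x).add ((hFolner s).const_mul _)) hN

end Representation

theorem isometrizable_of_folner_cesaro_bounds_general
    {S : Type*} [Semigroup S] [DecidableEq S]
    {H : Type*} [NormedAddCommGroup H] [InnerProductSpace ℂ H] [CompleteSpace H]
    (F : ℕ → Finset S) (hFne : ∀ N, (F N).Nonempty)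
    (hFolner : ∀ s : S, Filter.Tendsto
      (fun N : ℕ => ((((F N).image (· * s) \ F N) ∪ (F N \ (F N).image (· * s))).card : ℝ)
        / (F N).card) Filter.atTop (nhds 0))
    (π : S → (H →L[ℂ] H))
    (hrep : ∀ s t : S, π (s * t) = (π s).comp (π t))
    (m M : ℝ) (hm : 0 < m) (hM : 0 < M)
    (hbd : ∀ (N : ℕ) (x : H),
      m ^ 2 * ‖x‖ ^ 2 ≤ (1 / ((F N).card : ℝ)) * ∑ g ∈ F N, ‖π g x‖ ^ 2 ∧
      (1 / ((F N).card : ℝ)) * ∑ g ∈ F N, ‖π g x‖ ^ 2 ≤ M ^ 2 * ‖x‖ ^ 2)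
    (hsd : ∀ s : S, Filter.Tendsto
      (fun N : ℕ => (1 / ((F N).card : ℝ)) *
        ∑ g ∈ ((F N).image (· * s) \ F N) ∪ (F N \ (F N).image (· * s)), ‖π g‖ ^ 2)
      Filter.atTop (nhds 0)) :
    ∃ L : H ≃L[ℂ] H,
      ‖(L.symm : H →L[ℂ] H)‖ * ‖(L : H →L[ℂ] H)‖ ≤ M / m ∧
      ∀ (s : S) (x : H), ‖L.symm (π s (L x))‖ = ‖x‖ := by
  simp only [← sup_eq_union, ← symmDiff_def] at hFolner hsd
  set U : Ultrafilter ℕ := Ultrafilter.of atTop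
  have hU : (U : Filter ℕ) ≤ atTop := Ultrafilter.of_le atTop
  obtain ⟨G, q, hGq, hq⟩ := exists_tendsto_cesaroNormSq U F fun N x => (hbd N x).2
  have hq_lb : ∀ x, m ^ 2 * ‖x‖ ^ 2 ≤ q x := fun x =>
    ge_of_tendsto (hq x) (Eventually.of_forall fun N => (hbd N x).1)
  have hq_ub : ∀ x, q x ≤ M ^ 2 * ‖x‖ ^ 2 := fun x =>
    le_of_tendsto (hq x) (Eventually.of_forall fun N => (hbd N x).2)
  have hsub : ∀ s x, q x ≤ q (π s x) :=
    le_apply_of_tendsto_cesaroNormSq hrep hq fun s => (hsd s).mono_left hU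
  have hbounded : ∀ s x, ‖π s x‖ ^ 2 ≤ 2 * M ^ 4 / m ^ 2 * ‖x‖ ^ 2 := fun s => by
    obtain ⟨N, hN⟩ := exists_two_mul_lt_of_tendsto_div (fun N => (hFne N).card_pos) (hFolner s)
    exact norm_sq_apply_le_of_le_apply hrep hN hm (fun x => (hbd N x).2) hq_lb hq_ub hsub
  exact exists_equiv_isometry_of_invariant hGq hm hM.le hq_lb hq_ub π
    (apply_eq_of_tendsto_cesaroNormSq hrep hbounded (fun s => (hFolner s).mono_left hU) hq hsub)

theorem isometrizable_of_folner_cesaro_bounds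
    {S : Type*} [Semigroup S] [Countable S] [DecidableEq S]
    {H : Type*} [NormedAddCommGroup H] [InnerProductSpace ℂ H] [CompleteSpace H]
    (F : ℕ → Finset S) (hFne : ∀ N, (F N).Nonempty)
    (hFolner : ∀ s : S, Filter.Tendsto
      (fun N : ℕ => ((((F N).image (· * s) \ F N) ∪ (F N \ (F N).image (· * s))).card : ℝ)
        / (F N).card) Filter.atTop (nhds 0))
    (π : S → (H →L[ℂ] H))
    (hrep : ∀ s t : S, π (s * t) = (π s).comp (π t))
    (m M : ℝ) (hm : 0 < m) (hM : 0 < M)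
    (hbd : ∀ (N : ℕ) (x : H),
      m ^ 2 * ‖x‖ ^ 2 ≤ (1 / ((F N).card : ℝ)) * ∑ g ∈ F N, ‖π g x‖ ^ 2 ∧
      (1 / ((F N).card : ℝ)) * ∑ g ∈ F N, ‖π g x‖ ^ 2 ≤ M ^ 2 * ‖x‖ ^ 2)
    (hsd : ∀ s : S, Filter.Tendsto
      (fun N : ℕ => (1 / ((F N).card : ℝ)) *
        ∑ g ∈ ((F N).image (· * s) \ F N) ∪ (F N \ (F N).image (· * s)), ‖π g‖ ^ 2)
      Filter.atTop (nhds 0)) :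
    ∃ L : H ≃L[ℂ] H,
      ‖(L.symm : H →L[ℂ] H)‖ * ‖(L : H →L[ℂ] H)‖ ≤ M / m ∧
      ∀ (s : S) (x : H), ‖L.symm (π s (L x))‖ = ‖x‖ :=
  isometrizable_of_folner_cesaro_bounds_general F hFne hFolner π hrep m M hm hM hbd hsd
end

section
/- Let G be a group and π : G → B(H) a representation by invertible operators. Fix a finitely additive, right-invariant probability mean on G, and suppose the functions g ↦ ‖π(g)x‖² and g ↦ ‖π(g)*x‖² are bounded by C²‖x‖² in mean for every x ∈ H, for some C ≥ 1. Then ‖x‖² ≤ C²·mean(g ↦ ‖π(g⁻¹)x‖²) for every x ∈ H; i.e., the mean of the squared orbit norms along inverses is bounded below by C⁻²‖x‖². -/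
open ContinuousLinearMap

theorem norm_sq_le_norm_mul_norm_adjoint {𝕜 H : Type*} [RCLike 𝕜] [NormedAddCommGroup H]
    [InnerProductSpace 𝕜 H] [CompleteSpace H] {S T : H →L[𝕜] H} {x : H} (hx : T (S x) = x) :
    ‖x‖ ^ 2 ≤ ‖S x‖ * ‖adjoint T x‖ := by
  calc ‖x‖ ^ 2 = RCLike.re (inner 𝕜 (S x) (adjoint T x)) := by
        rw [adjoint_inner_right, hx, inner_self_eq_norm_sq]
    _ ≤ ‖inner 𝕜 (S x) (adjoint T x)‖ := RCLike.re_le_norm _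
    _ ≤ ‖S x‖ * ‖adjoint T x‖ := norm_inner_le_norm _ _

section Mean

variable {G : Type*} {mean : (G → ℝ) → ℝ}

theorem mean_const (hsmul : ∀ (c : ℝ) (f : G → ℝ), mean (c • f) = c * mean f)
    (hone : mean (fun _ => 1) = 1) (c : ℝ) : mean (fun _ => c) = c := by
  have hc : (fun _ : G => c) = c • fun _ : G => (1 : ℝ) := by
    funext; simp
  rw [hc, hsmul, hone, mul_one]

theorem mean_mul_add (hadd : ∀ f g : G → ℝ, mean (f + g) = mean f + mean g)
    (hsmul : ∀ (c : ℝ) (f : G → ℝ), mean (c • f) = c * mean f) (a : ℝ) (f h : G → ℝ) :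
    mean (fun g => a * f g + h g) = a * mean f + mean h := by
  rw [← hsmul, ← hadd]
  rfl

end Mean

theorem mean_lower_bound_along_inverses_general
    {G : Type*} [Group G]
    {H : Type*} [NormedAddCommGroup H] [InnerProductSpace ℂ H] [CompleteSpace H]
    (π : G → (H →L[ℂ] H))
    (hrep : ∀ g h : G, π (g * h) = (π g).comp (π h))
    (hone : π 1 = ContinuousLinearMap.id ℂ H)
    (mean : (G → ℝ) → ℝ)
    (hadd : ∀ f g : G → ℝ, mean (f + g) = mean f + mean g)
    (hsmul : ∀ (c : ℝ) (f : G → ℝ), mean (c • f) = c * mean f)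
    (hmono : ∀ f g : G → ℝ, (∀ t, f t ≤ g t) → mean f ≤ mean g)
    (hone' : mean (fun _ => 1) = 1)
    (C : ℝ) (hC : 1 ≤ C)
    (hup' : ∀ x : H, mean (fun g => ‖adjoint (π g) x‖ ^ 2) ≤ C ^ 2 * ‖x‖ ^ 2) :
    ∀ x : H, ‖x‖ ^ 2 ≤ C ^ 2 * mean (fun g => ‖π g⁻¹ x‖ ^ 2) := by
  intro x
  have hC2 : 0 < C ^ 2 := pow_pos (by linarith) 2
  have hinv_apply (g : G) : π g (π g⁻¹ x) = x := by
    rw [← comp_apply, ← hrep, mul_inv_cancel, hone, id_apply]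
  -- AM–GM with weight `C²` on `‖x‖² ≤ ‖π g⁻¹ x‖ ‖π(g)* x‖`
  have pointwise (g : G) :
      2 * C ^ 2 * ‖x‖ ^ 2 ≤ C ^ 4 * ‖π g⁻¹ x‖ ^ 2 + ‖adjoint (π g) x‖ ^ 2 := by
    have hcs := norm_sq_le_norm_mul_norm_adjoint (hinv_apply g)
    nlinarith [two_mul_le_add_sq (C ^ 2 * ‖π g⁻¹ x‖) ‖adjoint (π g) x‖]
  have hmean := hmono _ _ pointwise
  rw [mean_const hsmul hone', mean_mul_add hadd hsmul] at hmean
  have : C ^ 2 * ‖x‖ ^ 2 ≤ C ^ 2 * (C ^ 2 * mean (fun g => ‖π g⁻¹ x‖ ^ 2)) := by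
    linarith [hup' x]
  exact le_of_mul_le_mul_left this hC2

theorem mean_lower_bound_along_inverses
    {G : Type*} [Group G]
    {H : Type*} [NormedAddCommGroup H] [InnerProductSpace ℂ H] [CompleteSpace H]
    (π : G → (H →L[ℂ] H))
    (hrep : ∀ g h : G, π (g * h) = (π g).comp (π h))
    (hone : π 1 = ContinuousLinearMap.id ℂ H)
    (mean : (G → ℝ) → ℝ)
    (hadd : ∀ f g : G → ℝ, mean (f + g) = mean f + mean g)
    (hsmul : ∀ (c : ℝ) (f : G → ℝ), mean (c • f) = c * mean f)
    (hmono : ∀ f g : G → ℝ, (∀ t, f t ≤ g t) → mean f ≤ mean g)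
    (hone' : mean (fun _ => 1) = 1)
    (hinv : ∀ (f : G → ℝ) (s : G), mean (fun g => f (g * s)) = mean f)
    (C : ℝ) (hC : 1 ≤ C)
    (hup : ∀ x : H, mean (fun g => ‖π g x‖ ^ 2) ≤ C ^ 2 * ‖x‖ ^ 2)
    (hup' : ∀ x : H, mean (fun g => ‖adjoint (π g) x‖ ^ 2) ≤ C ^ 2 * ‖x‖ ^ 2) :
    ∀ x : H, ‖x‖ ^ 2 ≤ C ^ 2 * mean (fun g => ‖π g⁻¹ x‖ ^ 2) :=
  mean_lower_bound_along_inverses_general π hrep hone mean hadd hsmul hmono hone' C hC hup'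
end
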